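/- arXiv:0812.1138 — 4 statements merged into one kernel-verified Lean document; each statement's English description precedes it below -/
import Mathlib

section
/- Let f : Y → X be a morphism of simplicial sets such that Y and X are locally finite and, for every n, the component map f_n : Y_n → X_n has finite fibers (i.e., the preimage of each point is finite). Then the induced continuous map |f| : |Y| → |X| on geometric realizations is a proper map (the preimage of every compact subset is compact). -/
open CategoryTheory Simplicial

/-- A simplex of a simplicial set is *degenerate* if it is in the image of some
degeneracy map (every `0`-simplex is nondegenerate). -/
def SSet.IsDegenerate (X : SSet) : ∀ {n : ℕ}, X _⦋n⦌ → Prop := fun {n} x => match n, x with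
  | 0, _ => False
  | n + 1, x => ∃ i : Fin (n + 1), x ∈ Set.range (X.σ i)

/-- Two simplices `x ∈ X_n`, `x' ∈ X_m` are *adjacent* if there are morphisms
`f : [k] ⟶ ⦋n⦌` and `f' : [k] ⟶ ⦋m⦌` in the simplex category with
`X(f)(x) = X(f')(x')`. -/
def SSet.Adjacent (X : SSet) {n m : ℕ} (x : X _⦋n⦌) (x' : X _⦋m⦌) : Prop :=
  ∃ (k : ℕ) (f : (⦋k⦌ : SimplexCategory) ⟶ ⦋n⦌) (f' : (⦋k⦌ : SimplexCategory) ⟶ ⦋m⦌),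
    X.map f.op x = X.map f'.op x'

/-- A simplicial set is *locally finite* if each simplex is adjacent to only
finitely many nondegenerate simplices. -/
def SSet.IsLocallyFinite (X : SSet) : Prop :=
  ∀ (n : ℕ) (x : X _⦋n⦌),
    {p : (m : ℕ) × X _⦋m⦌ | ¬ X.IsDegenerate p.2 ∧ X.Adjacent x p.2}.Finite

/-- A simplicial set is *finite* if it has only finitely many nondegenerate
simplices. -/
def SSet.IsFiniteSSet (X : SSet) : Prop :=
  {p : (m : ℕ) × X _⦋m⦌ | ¬ X.IsDegenerate p.2}.Finite

namespace SSetProper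
open Relation

open SimplexCategory

-- cross lemma for fibers of a monotone map
lemma fiber_lt {m a : ℕ} (σ : (⦋m⦌ : SimplexCategory) ⟶ ⦋a⦌) {b₁ b₂ : Fin (m+1)}
    {i₁ i₂ : Fin (a+1)} (h₁ : σ.toOrderHom b₁ = i₁) (h₂ : σ.toOrderHom b₂ = i₂)
    (h : i₁ < i₂) : b₁ < b₂ := by
  by_contra hb
  push_neg at hb
  have := σ.toOrderHom.monotone hb
  rw [h₁, h₂] at this
  exact absurd (lt_of_lt_of_le h this) (lt_irrefl _)

lemma exists_section_through {m a : ℕ} (σ : (⦋m⦌ : SimplexCategory) ⟶ ⦋a⦌)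
    (hσ : Function.Surjective σ.toOrderHom) (j : Fin (m+1)) :
    ∃ d : (⦋a⦌ : SimplexCategory) ⟶ ⦋m⦌, d ≫ σ = 𝟙 _ ∧ d.toOrderHom (σ.toOrderHom j) = j := by
  classical
  have hfib : ∀ i : Fin (a+1), (Finset.univ.filter (fun b => σ.toOrderHom b = i)).Nonempty := by
    intro i
    obtain ⟨b, hb⟩ := hσ i
    exact ⟨b, Finset.mem_filter.2 ⟨Finset.mem_univ b, hb⟩⟩
  set J := σ.toOrderHom j with hJ
  let dfun : Fin (a+1) → Fin (m+1) := fun i =>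
    if i < J then (Finset.univ.filter (fun b => σ.toOrderHom b = i)).min' (hfib i)
    else if i = J then j
    else (Finset.univ.filter (fun b => σ.toOrderHom b = i)).max' (hfib i)
  have hmem : ∀ i, σ.toOrderHom (dfun i) = i := by
    intro i
    by_cases h1 : i < J
    · have := (Finset.univ.filter (fun b => σ.toOrderHom b = i)).min'_mem (hfib i)
      simp only [Finset.mem_filter] at this
      simp only [dfun, if_pos h1]
      exact this.2
    · by_cases h2 : i = J
      · simp [dfun, h1, h2, hJ]
      · have := (Finset.univ.filter (fun b => σ.toOrderHom b = i)).max'_mem (hfib i)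
        simp only [Finset.mem_filter] at this
        simp only [dfun, if_neg h1, if_neg h2]
        exact this.2
  have hmono : Monotone dfun := by
    intro i₁ i₂ hle
    rcases eq_or_lt_of_le hle with rfl | hlt
    · exact le_rfl
    · exact le_of_lt (fiber_lt σ (hmem i₁) (hmem i₂) hlt)
  refine ⟨SimplexCategory.mkHom ⟨dfun, hmono⟩, ?_, ?_⟩
  · apply SimplexCategory.Hom.ext
    apply OrderHom.ext
    funext i
    simpa using hmem i
  · simp only [SimplexCategory.mkHom, SimplexCategory.Hom.toOrderHom_mk]
    show dfun J = j
    simp [dfun]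

-- ## Degeneracy and Eilenberg-Zilber

lemma isDegenerate_of_not_injective {X : SSet} {n : ℕ} {Δ' : SimplexCategory}
    (p : (⦋n⦌ : SimplexCategory) ⟶ Δ') (hp : ¬ Function.Injective p.toOrderHom)
    (z : X.obj (Opposite.op Δ')) : X.IsDegenerate (X.map p.op z) := by
  cases n with
  | zero =>
    refine absurd (fun a b _ => ?_) hp
    apply Fin.ext
    have ha := a.isLt; have hb := b.isLt
    simp only [SimplexCategory.len_mk] at ha hb
    omega
  | succ n =>
    obtain ⟨i, θ', hθ⟩ := SimplexCategory.eq_σ_comp_of_not_injective p hp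
    refine ⟨i, X.map θ'.op z, ?_⟩
    show X.map (SimplexCategory.σ i).op (X.map θ'.op z) = _
    rw [← FunctorToTypes.map_comp_apply, ← op_comp, ← hθ]

lemma epi_toOrderHom_surjective {x y : SimplexCategory} (p : x ⟶ y) [Epi p] :
    Function.Surjective p.toOrderHom :=
  SimplexCategory.epi_iff_surjective.mp inferInstance

lemma exists_ez {X : SSet} : ∀ {n : ℕ} (x : X _⦋n⦌), ∃ (m : ℕ)
    (p : (⦋n⦌ : SimplexCategory) ⟶ ⦋m⦌) (z : X _⦋m⦌),
    Epi p ∧ ¬ X.IsDegenerate z ∧ X.map p.op z = x := by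
  intro n
  induction n with
  | zero =>
    intro x
    exact ⟨0, 𝟙 _, x, inferInstance, not_false, by simp⟩
  | succ k ih =>
    intro x
    by_cases hx : X.IsDegenerate x
    · obtain ⟨i, x₁, hx₁⟩ := hx
      obtain ⟨m, p, z, hp, hz, hpz⟩ := ih x₁
      refine ⟨m, SimplexCategory.σ i ≫ p, z, epi_comp _ _, hz, ?_⟩
      rw [op_comp, FunctorToTypes.map_comp_apply, hpz]
      exact hx₁
    · exact ⟨k + 1, 𝟙 _, x, inferInstance, hx, by simp⟩

lemma injective_of_nondeg {X : SSet} {a : ℕ} {Δ' : SimplexCategory}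
    (e : (⦋a⦌ : SimplexCategory) ⟶ Δ') {w' : X.obj (Opposite.op Δ')} {w : X _⦋a⦌}
    (h : X.map e.op w' = w) (hw : ¬ X.IsDegenerate w) :
    Function.Injective e.toOrderHom := by
  have fac : Limits.factorThruImage e ≫ Limits.image.ι e = e := Limits.image.fac e
  by_contra hinj
  have hfti : ¬ Function.Injective (Limits.factorThruImage e).toOrderHom := by
    intro hcon
    apply hinj
    rw [← fac]
    intro b₁ b₂ hb
    apply hcon
    have : ∀ c, (Limits.factorThruImage e ≫ Limits.image.ι e).toOrderHom c
        = (Limits.image.ι e).toOrderHom ((Limits.factorThruImage e).toOrderHom c) := fun c => rfl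
    rw [this, this] at hb
    exact SimplexCategory.mono_iff_injective.mp inferInstance hb
  apply hw
  rw [← h, ← fac, op_comp, FunctorToTypes.map_comp_apply]
  exact isDegenerate_of_not_injective _ hfti _

lemma len_le_of_nondeg {X : SSet} {a b : ℕ}
    (e : (⦋a⦌ : SimplexCategory) ⟶ ⦋b⦌) {w' : X _⦋b⦌} {w : X _⦋a⦌}
    (h : X.map e.op w' = w) (hw : ¬ X.IsDegenerate w) : a ≤ b := by
  have := Fintype.card_le_of_injective _ (injective_of_nondeg e h hw)
  simpa using this

/-- The Eilenberg-Zilber decomposition data. -/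
noncomputable def ez {X : SSet} {n : ℕ} (x : X _⦋n⦌) :
    Σ (m : ℕ), ((⦋n⦌ : SimplexCategory) ⟶ ⦋m⦌) × X _⦋m⦌ :=
  ⟨(exists_ez x).choose, (exists_ez x).choose_spec.choose,
    (exists_ez x).choose_spec.choose_spec.choose⟩

lemma ez_spec {X : SSet} {n : ℕ} (x : X _⦋n⦌) :
    Epi (ez x).2.1 ∧ ¬ X.IsDegenerate (ez x).2.2 ∧ X.map (ez x).2.1.op (ez x).2.2 = x :=
  (exists_ez x).choose_spec.choose_spec.choose_spec

lemma ez_unique {X : SSet} {n : ℕ} (x : X _⦋n⦌) {m : ℕ}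
    (p : (⦋n⦌ : SimplexCategory) ⟶ ⦋m⦌) (z : X _⦋m⦌) (hp : Epi p)
    (hz : ¬ X.IsDegenerate z) (hpz : X.map p.op z = x) :
    (⟨m, p, z⟩ : Σ (m : ℕ), ((⦋n⦌ : SimplexCategory) ⟶ ⦋m⦌) × X _⦋m⦌) = ez x := by
  obtain ⟨hp', hz', hpz'⟩ := ez_spec x
  set m' := (ez x).1 with hm'
  set p' := (ez x).2.1
  set z' := (ez x).2.2
  -- a helper producing, for a section of p through j, the facts
  have key : ∀ {mc md : ℕ} (pc : (⦋n⦌ : SimplexCategory) ⟶ ⦋mc⦌) (zc : X _⦋mc⦌)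
      (qc : (⦋n⦌ : SimplexCategory) ⟶ ⦋md⦌) (wc : X _⦋md⦌),
      Epi pc → ¬ X.IsDegenerate zc → ¬ X.IsDegenerate wc →
      X.map pc.op zc = X.map qc.op wc →
      ∀ (j : Fin (n+1)), ∃ d : (⦋mc⦌ : SimplexCategory) ⟶ ⦋n⦌,
        d ≫ pc = 𝟙 _ ∧ d.toOrderHom (pc.toOrderHom j) = j ∧
        zc = X.map (d ≫ qc).op wc ∧ Function.Injective (d ≫ qc).toOrderHom := by
    intro mc md pc zc qc wc hpc hzc hwc heq j
    obtain ⟨d, hd1, hd2⟩ := exists_section_through pc (epi_toOrderHom_surjective pc) j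
    have hz : zc = X.map (d ≫ qc).op wc := by
      have : zc = X.map d.op (X.map pc.op zc) := by
        rw [← FunctorToTypes.map_comp_apply, ← op_comp, hd1, op_id, FunctorToTypes.map_id_apply]
      rw [this, heq, ← FunctorToTypes.map_comp_apply, ← op_comp]
    exact ⟨d, hd1, hd2, hz, injective_of_nondeg _ hz.symm hzc⟩
  -- m = m'
  have hmm : m = m' := by
    obtain ⟨d, -, -, -, hinj⟩ := key p z p' z' hp hz hz' (hpz.trans hpz'.symm) 0
    obtain ⟨d', -, -, -, hinj'⟩ := key p' z' p z hp' hz' hz (hpz'.trans hpz.symm) 0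
    have h1 := Fintype.card_le_of_injective _ hinj
    have h2 := Fintype.card_le_of_injective _ hinj'
    simp only [Fintype.card_fin, SimplexCategory.len_mk] at h1 h2
    omega
  subst hmm
  have hzz : z = z' := by
    obtain ⟨d, -, -, hz1, hinj⟩ := key p z p' z' hp hz hz' (hpz.trans hpz'.symm) 0
    have : Mono (d ≫ p') := SimplexCategory.mono_iff_injective.mpr hinj
    rw [SimplexCategory.eq_id_of_mono (d ≫ p')] at hz1
    rw [op_id, FunctorToTypes.map_id_apply] at hz1
    exact hz1
  have hpp : p = p' := by
    apply SimplexCategory.Hom.ext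
    apply OrderHom.ext
    funext j
    obtain ⟨d, hd1, hd2, hz1, hinj⟩ := key p z p' z' hp hz hz' (hpz.trans hpz'.symm) j
    have : Mono (d ≫ p') := SimplexCategory.mono_iff_injective.mpr hinj
    have hid := SimplexCategory.eq_id_of_mono (d ≫ p')
    have : (d ≫ p').toOrderHom (p.toOrderHom j) = p.toOrderHom j := by rw [hid]; rfl
    have h2 : p'.toOrderHom (d.toOrderHom (p.toOrderHom j)) = p.toOrderHom j := this
    rw [hd2] at h2
    exact h2.symm
  rw [hzz, hpp]

lemma ez_epi {X : SSet} {n : ℕ} (x : X _⦋n⦌) : Epi (ez x).2.1 := (ez_spec x).1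
lemma ez_nondeg {X : SSet} {n : ℕ} (x : X _⦋n⦌) : ¬ X.IsDegenerate (ez x).2.2 := (ez_spec x).2.1
lemma ez_fac {X : SSet} {n : ℕ} (x : X _⦋n⦌) : X.map (ez x).2.1.op (ez x).2.2 = x := (ez_spec x).2.2

lemma ez_lt_of_deg {X : SSet} {n : ℕ} {x : X _⦋n⦌} (hx : X.IsDegenerate x) :
    (ez x).1 < n := by
  obtain ⟨hepi, hnd, hfac⟩ := ez_spec x
  rcases hez : ez x with ⟨m, p, z⟩
  rw [hez] at hepi hnd hfac
  simp only at hepi hnd hfac ⊢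
  have hsur := epi_toOrderHom_surjective p
  have hle : m ≤ n := by
    have := Fintype.card_le_of_surjective _ hsur
    simp only [Fintype.card_fin, SimplexCategory.len_mk] at this
    omega
  rcases lt_or_eq_of_le hle with h | h
  · exact h
  · exfalso
    subst h
    rw [SimplexCategory.eq_id_of_epi p] at hfac
    simp only [op_id, FunctorToTypes.map_id_apply] at hfac
    exact hnd (by rw [hfac]; exact hx)

lemma ez_nondeg_self {X : SSet} {n : ℕ} {x : X _⦋n⦌} (hx : ¬ X.IsDegenerate x) :
    ez x = ⟨n, 𝟙 _, x⟩ := by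
  exact (ez_unique x (𝟙 _) x inferInstance hx (by simp)).symm

-- ## toTopObj combinatorics

open scoped NNReal

abbrev _root_.SimplexCategory.toTopObj (x : SimplexCategory) : Set (Fin (x.len + 1) → ℝ) :=
  stdSimplex ℝ (Fin (x.len + 1))

noncomputable def _root_.SimplexCategory.toTopMap {x y : SimplexCategory} (f : x ⟶ y) :
    x.toTopObj → y.toTopObj :=
  stdSimplex.map (f.toOrderHom : Fin (x.len + 1) → Fin (y.len + 1))

open Classical in
lemma _root_.SimplexCategory.coe_toTopMap {x y : SimplexCategory} (f : x ⟶ y) (g : x.toTopObj)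
    (i : Fin (y.len + 1)) :
    toTopMap f g i = ∑ j ∈ Finset.univ.filter (fun j => f.toOrderHom j = i), g j := by
  simp only [SimplexCategory.toTopMap, stdSimplex.map_coe]
  rw [FunOnFinite.linearMap_apply_apply]

lemma _root_.SimplexCategory.continuous_toTopMap {x y : SimplexCategory} (f : x ⟶ y) :
    Continuous (toTopMap f) :=
  stdSimplex.continuous_map _

lemma _root_.SimplexCategory.toTopObj.ext {x : SimplexCategory} (t u : x.toTopObj)
    (h : (t : Fin (x.len + 1) → ℝ) = u) : t = u :=
  stdSimplex.ext h

lemma toTopObj_sum {n : ℕ} (t : (⦋n⦌ : SimplexCategory).toTopObj) :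
    ∑ i : Fin (n+1), t i = 1 := t.2.2

lemma toTopObj_ext' {n : ℕ} (t u : (⦋n⦌ : SimplexCategory).toTopObj)
    (h : ∀ i : Fin (n+1), t i = u i) : t = u :=
  SimplexCategory.toTopObj.ext t u (funext h)

lemma toTopMap_comp {x y z : SimplexCategory} (f : x ⟶ y) (g : y ⟶ z) (u : x.toTopObj) :
    toTopMap (f ≫ g) u = toTopMap g (toTopMap f u) := by
  unfold SimplexCategory.toTopMap
  rw [stdSimplex.map_comp_apply]
  rfl

lemma toTopMap_id {x : SimplexCategory} (u : x.toTopObj) : toTopMap (𝟙 x) u = u := by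
  exact stdSimplex.map_id_apply u

open Classical in
lemma toTopMap_apply {k n : ℕ} (f : (⦋k⦌ : SimplexCategory) ⟶ ⦋n⦌)
    (g : (⦋k⦌ : SimplexCategory).toTopObj) (i : Fin (n+1)) :
    toTopMap f g i = ∑ j ∈ Finset.univ.filter (fun j : Fin (k+1) => f.toOrderHom j = i), g j := by
  rw [show ((toTopMap f g) i : ℝ) = _ from SimplexCategory.coe_toTopMap f g i]

noncomputable def supp {n : ℕ} (t : (⦋n⦌ : SimplexCategory).toTopObj) : Finset (Fin (n+1)) :=
  Finset.univ.filter (fun i => t i ≠ 0)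

lemma mem_supp {n : ℕ} (t : (⦋n⦌ : SimplexCategory).toTopObj) (i : Fin (n+1)) :
    i ∈ supp t ↔ t i ≠ 0 := by simp [supp]

/-- interior points -/
def Itr {n : ℕ} (t : (⦋n⦌ : SimplexCategory).toTopObj) : Prop := ∀ i : Fin (n+1), t i ≠ 0

lemma supp_eq_univ_iff {n : ℕ} (t : (⦋n⦌ : SimplexCategory).toTopObj) :
    supp t = Finset.univ ↔ Itr t := by
  constructor
  · intro h i
    have : i ∈ supp t := h ▸ Finset.mem_univ i
    exact (mem_supp t i).mp this
  · intro h
    ext i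
    simp [mem_supp, h i]

lemma supp_nonempty {n : ℕ} (t : (⦋n⦌ : SimplexCategory).toTopObj) : (supp t).Nonempty := by
  by_contra h
  rw [Finset.not_nonempty_iff_eq_empty] at h
  have h0 : ∑ i : Fin (n+1), t i = 0 := by
    apply Finset.sum_eq_zero
    intro i _
    by_contra hi
    have : i ∈ supp t := (mem_supp t i).mpr hi
    simp [h] at this
  rw [toTopObj_sum t] at h0
  exact one_ne_zero h0

lemma card_pred_succ {α : Type*} {J : Finset α} (hJ : J.Nonempty) : J.card = J.card - 1 + 1 :=
  (Nat.succ_pred_eq_of_pos hJ.card_pos).symm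

/-- the monotone inclusion of a nonempty finset of vertices -/
def inclHom {n : ℕ} (J : Finset (Fin (n+1))) (hJ : J.Nonempty) :
    (⦋J.card - 1⦌ : SimplexCategory) ⟶ ⦋n⦌ :=
  SimplexCategory.mkHom
    ⟨fun a => (J.orderIsoOfFin (card_pred_succ hJ) a : Fin (n+1)),
     fun a b hab => by exact_mod_cast (J.orderIsoOfFin (card_pred_succ hJ)).monotone hab⟩

lemma inclHom_mem {n : ℕ} (J : Finset (Fin (n+1))) (hJ : J.Nonempty) (a) :
    (inclHom J hJ).toOrderHom a ∈ J :=
  (J.orderIsoOfFin (card_pred_succ hJ) a).2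

lemma inclHom_injective {n : ℕ} (J : Finset (Fin (n+1))) (hJ : J.Nonempty) :
    Function.Injective (inclHom J hJ).toOrderHom := by
  intro a b hab
  exact (J.orderIsoOfFin (card_pred_succ hJ)).injective (Subtype.ext hab)

lemma inclHom_symm_apply {n : ℕ} (J : Finset (Fin (n+1))) (hJ : J.Nonempty) {j : Fin (n+1)}
    (hj : j ∈ J) :
    (inclHom J hJ).toOrderHom ((J.orderIsoOfFin (card_pred_succ hJ)).symm ⟨j, hj⟩) = j := by
  show ((J.orderIsoOfFin (card_pred_succ hJ)) ((J.orderIsoOfFin _).symm ⟨j, hj⟩) : Fin (n+1)) = j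
  rw [OrderIso.apply_symm_apply]

lemma inclHom_surjOn {n : ℕ} (J : Finset (Fin (n+1))) (hJ : J.Nonempty) {j : Fin (n+1)}
    (hj : j ∈ J) : ∃ a, (inclHom J hJ).toOrderHom a = j :=
  ⟨(J.orderIsoOfFin (card_pred_succ hJ)).symm ⟨j, hj⟩, inclHom_symm_apply J hJ hj⟩

lemma inclHom_eq_iff {n : ℕ} (J : Finset (Fin (n+1))) (hJ : J.Nonempty) (a) {j : Fin (n+1)}
    (hj : j ∈ J) : (inclHom J hJ).toOrderHom a = j ↔
      a = (J.orderIsoOfFin (card_pred_succ hJ)).symm ⟨j, hj⟩ := by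
  constructor
  · intro h
    have h2 : (J.orderIsoOfFin (card_pred_succ hJ)) a = ⟨j, hj⟩ := Subtype.ext h
    rw [← h2, OrderIso.symm_apply_apply]
  · rintro rfl
    exact inclHom_symm_apply J hJ hj

/-- restriction of a point to a finset containing its support -/
def restr {n : ℕ} (J : Finset (Fin (n+1))) (hJ : J.Nonempty)
    (t : (⦋n⦌ : SimplexCategory).toTopObj) (ht : supp t ⊆ J) :
    (⦋J.card - 1⦌ : SimplexCategory).toTopObj := by
  refine ⟨fun a => t ((inclHom J hJ).toOrderHom a), fun a => stdSimplex.zero_le t _, ?_⟩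
  show ∑ a : Fin (J.card - 1 + 1), t ((inclHom J hJ).toOrderHom a) = 1
  have h1 : ∑ a : Fin (J.card - 1 + 1), t ((inclHom J hJ).toOrderHom a) = ∑ j ∈ J, t j := by
    apply Finset.sum_bij (fun a _ => (inclHom J hJ).toOrderHom a)
    · intro a _; exact inclHom_mem J hJ a
    · intro a _ b _ h; exact inclHom_injective J hJ h
    · intro j hj; obtain ⟨a, ha⟩ := inclHom_surjOn J hJ hj; exact ⟨a, Finset.mem_univ a, ha⟩
    · intro a _; rfl
  rw [h1]
  have h2 : ∑ j ∈ J, t j = ∑ j : Fin (n+1), t j := by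
    apply Finset.sum_subset (Finset.subset_univ J)
    intro j _ hj
    by_contra hne
    exact hj (ht ((mem_supp t j).mpr hne))
  rw [h2]
  exact toTopObj_sum t

lemma restr_apply {n : ℕ} (J : Finset (Fin (n+1))) (hJ : J.Nonempty)
    (t : (⦋n⦌ : SimplexCategory).toTopObj) (ht : supp t ⊆ J) (a) :
    restr J hJ t ht a = t ((inclHom J hJ).toOrderHom a) := rfl

lemma restr_itr {n : ℕ} (t : (⦋n⦌ : SimplexCategory).toTopObj) :
    Itr (restr (supp t) (supp_nonempty t) t subset_rfl) := by
  intro a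
  exact (mem_supp t _).mp (inclHom_mem _ _ a)

lemma toTopMap_inclHom_restr {n : ℕ} (J : Finset (Fin (n+1))) (hJ : J.Nonempty)
    (t : (⦋n⦌ : SimplexCategory).toTopObj) (ht : supp t ⊆ J) :
    toTopMap (inclHom J hJ) (restr J hJ t ht) = t := by
  classical
  apply toTopObj_ext'
  intro i
  rw [toTopMap_apply]
  by_cases hi : i ∈ J
  · rw [Finset.sum_eq_single ((J.orderIsoOfFin (card_pred_succ hJ)).symm ⟨i, hi⟩)]
    · rw [restr_apply, inclHom_symm_apply J hJ hi]
    · intro b hb hbne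
      exact absurd ((inclHom_eq_iff J hJ b hi).mp (Finset.mem_filter.mp hb).2) hbne
    · intro h
      exact absurd (Finset.mem_filter.mpr ⟨Finset.mem_univ ((J.orderIsoOfFin (card_pred_succ hJ)).symm ⟨i, hi⟩), inclHom_symm_apply J hJ hi⟩) h
  · rw [Finset.sum_eq_zero]
    · symm
      by_contra hne
      exact hi (ht ((mem_supp t i).mpr hne))
    · intro b hb
      exact absurd ((Finset.mem_filter.mp hb).2 ▸ inclHom_mem J hJ b) hi

open Classical in
lemma supp_toTopMap {k n : ℕ} (g : (⦋k⦌ : SimplexCategory) ⟶ ⦋n⦌)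
    (t : (⦋k⦌ : SimplexCategory).toTopObj) :
    supp (toTopMap g t) = (supp t).image g.toOrderHom := by
  ext i
  rw [mem_supp, Finset.mem_image, toTopMap_apply]
  constructor
  · intro h
    obtain ⟨j, hj, hval⟩ := Finset.exists_ne_zero_of_sum_ne_zero h
    simp only [Finset.mem_filter, Finset.mem_univ, true_and] at hj
    exact ⟨j, (mem_supp t j).mpr hval, hj⟩
  · rintro ⟨j, hj, rfl⟩
    intro h0
    rw [Finset.sum_eq_zero_iff_of_nonneg (fun j _ => stdSimplex.zero_le t j)] at h0
    exact (mem_supp t j).mp hj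
      (h0 j (Finset.mem_filter.mpr ⟨Finset.mem_univ _, rfl⟩))

-- ## corestriction

lemma toOrderHom_comp {a b c : SimplexCategory} (f : a ⟶ b) (g : b ⟶ c) (j) :
    (f ≫ g).toOrderHom j = g.toOrderHom (f.toOrderHom j) := rfl

noncomputable def corestrict {k n : ℕ} (g : (⦋k⦌ : SimplexCategory) ⟶ ⦋n⦌)
    (J : Finset (Fin (k+1))) (hJ : J.Nonempty) (J' : Finset (Fin (n+1))) (hJ' : J'.Nonempty)
    (h : J.image g.toOrderHom = J') : (⦋J.card - 1⦌ : SimplexCategory) ⟶ ⦋J'.card - 1⦌ :=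
  SimplexCategory.mkHom
    ⟨fun a => (J'.orderIsoOfFin (card_pred_succ hJ')).symm
        ⟨g.toOrderHom ((inclHom J hJ).toOrderHom a), by
          rw [← h]; exact Finset.mem_image_of_mem _ (inclHom_mem J hJ a)⟩,
     by
      intro a b hab
      apply ((J'.orderIsoOfFin (card_pred_succ hJ')).symm).monotone
      show g.toOrderHom ((inclHom J hJ).toOrderHom a) ≤ g.toOrderHom ((inclHom J hJ).toOrderHom b)
      exact g.toOrderHom.monotone ((inclHom J hJ).toOrderHom.monotone hab)⟩

lemma corestrict_apply_iff {k n : ℕ} (g : (⦋k⦌ : SimplexCategory) ⟶ ⦋n⦌)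
    (J : Finset (Fin (k+1))) (hJ : J.Nonempty) (J' : Finset (Fin (n+1))) (hJ' : J'.Nonempty)
    (h : J.image g.toOrderHom = J') (a) (b) :
    (corestrict g J hJ J' hJ' h).toOrderHom a = b ↔
      g.toOrderHom ((inclHom J hJ).toOrderHom a) = (inclHom J' hJ').toOrderHom b := by
  show ((J'.orderIsoOfFin (card_pred_succ hJ')).symm ⟨g.toOrderHom ((inclHom J hJ).toOrderHom a), _⟩ = b) ↔ _
  rw [OrderIso.symm_apply_eq]
  constructor
  · intro he
    have := congrArg (fun (z : {x // x ∈ J'}) => (z : Fin (n+1))) he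
    exact this
  · intro he
    exact Subtype.ext he

lemma corestrict_fac {k n : ℕ} (g : (⦋k⦌ : SimplexCategory) ⟶ ⦋n⦌)
    (J : Finset (Fin (k+1))) (hJ : J.Nonempty) (J' : Finset (Fin (n+1))) (hJ' : J'.Nonempty)
    (h : J.image g.toOrderHom = J') :
    corestrict g J hJ J' hJ' h ≫ inclHom J' hJ' = inclHom J hJ ≫ g := by
  apply SimplexCategory.Hom.ext
  apply OrderHom.ext
  funext a
  rw [toOrderHom_comp, toOrderHom_comp]
  exact ((corestrict_apply_iff g J hJ J' hJ' h a _).mp rfl).symm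

lemma corestrict_surjective {k n : ℕ} (g : (⦋k⦌ : SimplexCategory) ⟶ ⦋n⦌)
    (J : Finset (Fin (k+1))) (hJ : J.Nonempty) (J' : Finset (Fin (n+1))) (hJ' : J'.Nonempty)
    (h : J.image g.toOrderHom = J') :
    Function.Surjective (corestrict g J hJ J' hJ' h).toOrderHom := by
  intro b
  have hb : (inclHom J' hJ').toOrderHom b ∈ J.image g.toOrderHom := by
    rw [h]; exact inclHom_mem J' hJ' b
  obtain ⟨j, hj, hgj⟩ := Finset.mem_image.mp hb
  obtain ⟨a, ha⟩ := inclHom_surjOn J hJ hj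
  refine ⟨a, ?_⟩
  rw [corestrict_apply_iff, ha, hgj]

instance corestrict_epi {k n : ℕ} (g : (⦋k⦌ : SimplexCategory) ⟶ ⦋n⦌)
    (J : Finset (Fin (k+1))) (hJ : J.Nonempty) (J' : Finset (Fin (n+1))) (hJ' : J'.Nonempty)
    (h : J.image g.toOrderHom = J') : Epi (corestrict g J hJ J' hJ' h) :=
  SimplexCategory.epi_iff_surjective.mpr (corestrict_surjective g J hJ J' hJ' h)

open Classical in
lemma restr_toTopMap {k n : ℕ} (g : (⦋k⦌ : SimplexCategory) ⟶ ⦋n⦌)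
    (J : Finset (Fin (k+1))) (hJ : J.Nonempty) (J' : Finset (Fin (n+1))) (hJ' : J'.Nonempty)
    (h : J.image g.toOrderHom = J') (t : (⦋k⦌ : SimplexCategory).toTopObj)
    (ht : supp t ⊆ J) (ht' : supp (toTopMap g t) ⊆ J') :
    restr J' hJ' (toTopMap g t) ht' = toTopMap (corestrict g J hJ J' hJ' h) (restr J hJ t ht) := by
  apply toTopObj_ext'
  intro b
  rw [toTopMap_apply, restr_apply, toTopMap_apply]
  have step1 : ∑ j ∈ Finset.univ.filter
        (fun j : Fin (k+1) => g.toOrderHom j = (inclHom J' hJ').toOrderHom b), t j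
      = ∑ j ∈ J.filter (fun j : Fin (k+1) => g.toOrderHom j = (inclHom J' hJ').toOrderHom b), t j := by
    symm
    apply Finset.sum_subset (Finset.filter_subset_filter _ (Finset.subset_univ J))
    intro j hj1 hj2
    simp only [Finset.mem_filter, Finset.mem_univ, true_and] at hj1
    simp only [Finset.mem_filter] at hj2
    by_contra hne
    exact hj2 ⟨ht ((mem_supp t j).mpr hne), hj1⟩
  rw [step1]
  symm
  apply Finset.sum_bij (fun a _ => (inclHom J hJ).toOrderHom a)
  · intro a ha
    simp only [Finset.mem_filter, Finset.mem_univ, true_and] at ha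
    exact Finset.mem_filter.mpr ⟨inclHom_mem J hJ a, (corestrict_apply_iff g J hJ J' hJ' h a b).mp ha⟩
  · intro a _ a' _ hh; exact inclHom_injective J hJ hh
  · intro j hj
    simp only [Finset.mem_filter] at hj
    obtain ⟨a, ha⟩ := inclHom_surjOn J hJ hj.1
    refine ⟨a, ?_, ha⟩
    simp only [Finset.mem_filter, Finset.mem_univ, true_and]
    rw [corestrict_apply_iff, ha]
    exact hj.2
  · intro a _; rfl

-- ## The explicit realization: points and canonical forms

abbrev PtT (X : SSet) : Type _ := Σ (p : Σ n : ℕ, X _⦋n⦌), (⦋p.1⦌ : SimplexCategory).toTopObj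

inductive PtRel (X : SSet) : PtT X → PtT X → Prop where
  | mk {k n : ℕ} (g : (⦋k⦌ : SimplexCategory) ⟶ ⦋n⦌) (x : X _⦋n⦌)
      (t : (⦋k⦌ : SimplexCategory).toTopObj) :
      PtRel X ⟨⟨k, X.map g.op x⟩, t⟩ ⟨⟨n, x⟩, toTopMap g t⟩

def ptSetoid (X : SSet) : Setoid (PtT X) := EqvGen.setoid (PtRel X)

abbrev QR (X : SSet) : Type _ := Quotient (ptSetoid X)

def qm {X : SSet} : PtT X → QR X := Quotient.mk (ptSetoid X)

lemma qm_rel {X : SSet} {k n : ℕ} (g : (⦋k⦌ : SimplexCategory) ⟶ ⦋n⦌) (x : X _⦋n⦌) (t) :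
    qm (X := X) ⟨⟨k, X.map g.op x⟩, t⟩ = qm ⟨⟨n, x⟩, toTopMap g t⟩ :=
  Quotient.sound (EqvGen.rel _ _ (PtRel.mk g x t))

noncomputable def canI {X : SSet} {m : ℕ} (z : X _⦋m⦌)
    (u : (⦋m⦌ : SimplexCategory).toTopObj) : PtT X :=
  ⟨⟨(ez z).1, (ez z).2.2⟩, toTopMap (ez z).2.1 u⟩

noncomputable def can {X : SSet} : PtT X → PtT X := fun a =>
  canI (X.map (inclHom (supp a.2) (supp_nonempty a.2)).op a.1.2)
    (restr (supp a.2) (supp_nonempty a.2) a.2 subset_rfl)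

lemma can_def {X : SSet} {n : ℕ} (x : X _⦋n⦌) (t) :
    can (X := X) ⟨⟨n, x⟩, t⟩ =
      canI (X.map (inclHom (supp t) (supp_nonempty t)).op x)
        (restr (supp t) (supp_nonempty t) t subset_rfl) := rfl

lemma canI_epi {X : SSet} {m' m : ℕ} (σ : (⦋m'⦌ : SimplexCategory) ⟶ ⦋m⦌) (hσ : Epi σ)
    (z : X _⦋m⦌) (u : (⦋m'⦌ : SimplexCategory).toTopObj) :
    canI (X.map σ.op z) u = canI z (toTopMap σ u) := by
  have h := ez_unique (X.map σ.op z) (σ ≫ (ez z).2.1) (ez z).2.2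
    (by haveI := hσ; haveI := ez_epi z; exact epi_comp _ _) (ez_nondeg z)
    (by rw [op_comp, FunctorToTypes.map_comp_apply, ez_fac])
  unfold canI
  rw [← h]
  simp only
  rw [toTopMap_comp]

lemma can_rel {X : SSet} {k n : ℕ} (g : (⦋k⦌ : SimplexCategory) ⟶ ⦋n⦌) (x : X _⦋n⦌) (t) :
    can (X := X) ⟨⟨k, X.map g.op x⟩, t⟩ = can ⟨⟨n, x⟩, toTopMap g t⟩ := by
  rw [can_def, can_def]
  have him : (supp t).image g.toOrderHom = supp (toTopMap g t) := (supp_toTopMap g t).symm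
  have fac := corestrict_fac g (supp t) (supp_nonempty t) (supp (toTopMap g t))
    (supp_nonempty (toTopMap g t)) him
  have h1 : X.map (inclHom (supp t) (supp_nonempty t)).op (X.map g.op x)
      = X.map (corestrict g (supp t) (supp_nonempty t) (supp (toTopMap g t))
          (supp_nonempty (toTopMap g t)) him).op
        (X.map (inclHom (supp (toTopMap g t)) (supp_nonempty (toTopMap g t))).op x) := by
    rw [← FunctorToTypes.map_comp_apply, ← FunctorToTypes.map_comp_apply, ← op_comp, ← op_comp, fac]
  rw [h1, canI_epi _ (corestrict_epi g _ _ _ _ him) _ _,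
    ← restr_toTopMap g _ _ _ _ him t subset_rfl subset_rfl]

lemma can_eq_of_rel {X : SSet} {a b : PtT X} (h : EqvGen (PtRel X) a b) : can a = can b := by
  induction h with
  | rel _ _ hr => cases hr with | mk g x t => exact can_rel g x t
  | refl => rfl
  | symm _ _ _ ih => exact ih.symm
  | trans _ _ _ _ _ ih1 ih2 => exact ih1.trans ih2

lemma qm_can {X : SSet} (a : PtT X) : qm a = qm (can a) := by
  obtain ⟨⟨n, x⟩, t⟩ := a
  rw [can_def]
  set J := supp t with hJ
  set hne := supp_nonempty t with hhne
  set u := restr J hne t subset_rfl with hu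
  set y := X.map (inclHom J hne).op x with hy
  unfold canI
  rcases hez : ez y with ⟨m, p, w⟩
  have hfac : X.map p.op w = y := by have := ez_fac y; rw [hez] at this; exact this
  have step1 : qm (X := X) ⟨⟨n, x⟩, t⟩ = qm ⟨⟨J.card - 1, y⟩, u⟩ := by
    conv_lhs => rw [← toTopMap_inclHom_restr J hne t subset_rfl]
    exact (qm_rel (inclHom J hne) x u).symm
  rw [step1, ← hfac]
  exact qm_rel p w u

lemma qm_eq_iff_can {X : SSet} (a b : PtT X) : qm a = qm b ↔ can a = can b := by
  constructor
  · intro h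
    exact can_eq_of_rel (Quotient.exact h)

  · intro h
    rw [qm_can a, qm_can b, h]

lemma inclHom_bijective_of_itr {n : ℕ} {t : (⦋n⦌ : SimplexCategory).toTopObj} (ht : Itr t) :
    Function.Bijective (inclHom (supp t) (supp_nonempty t)).toOrderHom := by
  refine ⟨inclHom_injective _ _, fun j => ?_⟩
  exact inclHom_surjOn _ _ ((mem_supp t j).mpr (ht j))

lemma itr_toTopMap {k n : ℕ} {σ : (⦋k⦌ : SimplexCategory) ⟶ ⦋n⦌}
    (hσ : Function.Surjective σ.toOrderHom) {u : (⦋k⦌ : SimplexCategory).toTopObj}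
    (hu : Itr u) : Itr (toTopMap σ u) := by
  rw [← supp_eq_univ_iff, supp_toTopMap, (supp_eq_univ_iff u).mpr hu]
  exact Finset.image_univ_of_surjective hσ

lemma adjacent_symm {X : SSet} {n m : ℕ} {x : X _⦋n⦌} {y : X _⦋m⦌}
    (h : X.Adjacent x y) : X.Adjacent y x := by
  obtain ⟨k, f, f', h⟩ := h
  exact ⟨k, f', f, h.symm⟩

lemma can_nondeg {X : SSet} (a : PtT X) : ¬ X.IsDegenerate (can a).1.2 :=
  ez_nondeg _

lemma can_itr {X : SSet} (a : PtT X) : Itr (can a).2 := by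
  haveI := ez_epi (X.map (inclHom (supp a.2) (supp_nonempty a.2)).op a.1.2)
  exact itr_toTopMap (@epi_toOrderHom_surjective _ _ _ this) (restr_itr a.2)

lemma can_adjacent {X : SSet} (a : PtT X) : X.Adjacent a.1.2 (can a).1.2 := by
  obtain ⟨⟨n, x⟩, t⟩ := a
  exact ⟨(supp t).card - 1, inclHom (supp t) (supp_nonempty t), (ez _).2.1, (ez_fac _).symm⟩

lemma can_eq_self {X : SSet} {n : ℕ} {x : X _⦋n⦌} {t} (ht : Itr t)
    (hx : ¬ X.IsDegenerate x) : can (X := X) ⟨⟨n, x⟩, t⟩ = ⟨⟨n, x⟩, t⟩ := by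
  rw [can_def]
  set ι := inclHom (supp t) (supp_nonempty t) with hι
  haveI hiso : IsIso ι := SimplexCategory.isIso_of_bijective (inclHom_bijective_of_itr ht)
  unfold canI
  rcases hez : ez (X.map ι.op x) with ⟨m, p, w⟩
  have hepi : Epi p := by have := ez_epi (X.map ι.op x); rw [hez] at this; exact this
  have hnd : ¬ X.IsDegenerate w := by have := ez_nondeg (X.map ι.op x); rw [hez] at this; exact this
  have hfac : X.map p.op w = X.map ι.op x := by
    have := ez_fac (X.map ι.op x); rw [hez] at this; exact this
  have h1 : X.map (inv ι ≫ p).op w = x := by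
    rw [op_comp, FunctorToTypes.map_comp_apply, hfac, ← FunctorToTypes.map_comp_apply,
      ← op_comp, IsIso.inv_hom_id, op_id, FunctorToTypes.map_id_apply]
  have h2 : (⟨m, (inv ι ≫ p, w)⟩ : Σ (m' : ℕ), ((⦋n⦌ : SimplexCategory) ⟶ ⦋m'⦌) × X _⦋m'⦌)
      = ⟨n, (𝟙 _, x)⟩ := by
    rw [ez_unique x (inv ι ≫ p) w (by haveI := hepi; exact epi_comp _ _) hnd h1]
    exact ez_nondeg_self hx
  obtain ⟨h3, h4⟩ := Sigma.mk.inj_iff.mp h2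
  subst h3
  have h5 := eq_of_heq h4
  have hw : w = x := congrArg Prod.snd h5
  have hp : p = ι := by
    have h6 : inv ι ≫ p = 𝟙 _ := congrArg Prod.fst h5
    calc p = (ι ≫ inv ι) ≫ p := by rw [IsIso.hom_inv_id, Category.id_comp]
    _ = ι ≫ (inv ι ≫ p) := by rw [Category.assoc]
    _ = ι := by rw [h6, Category.comp_id]
  rw [hw, hp, toTopMap_inclHom_restr]

lemma exists_epi_of_can_eq {X : SSet} {m n : ℕ} {z : X _⦋m⦌}
    {s : (⦋m⦌ : SimplexCategory).toTopObj} (hs : Itr s) {x : X _⦋n⦌} {t}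
    (h : can (X := X) ⟨⟨m, z⟩, s⟩ = ⟨⟨n, x⟩, t⟩) :
    ∃ τ : (⦋m⦌ : SimplexCategory) ⟶ ⦋n⦌, Epi τ ∧ X.map τ.op x = z := by
  rw [can_def] at h
  set ι := inclHom (supp s) (supp_nonempty s) with hι
  haveI hiso : IsIso ι := SimplexCategory.isIso_of_bijective (inclHom_bijective_of_itr hs)
  unfold canI at h
  rcases hez : ez (X.map ι.op z) with ⟨m', p, w⟩
  rw [hez] at h
  have hepi : Epi p := by have := ez_epi (X.map ι.op z); rw [hez] at this; exact this
  have hfac : X.map p.op w = X.map ι.op z := by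
    have := ez_fac (X.map ι.op z); rw [hez] at this; exact this
  have h1 : X.map (inv ι ≫ p).op w = z := by
    rw [op_comp, FunctorToTypes.map_comp_apply, hfac, ← FunctorToTypes.map_comp_apply,
      ← op_comp, IsIso.inv_hom_id, op_id, FunctorToTypes.map_id_apply]
  have hfst : (⟨m', w⟩ : Σ (k : ℕ), X _⦋k⦌) = ⟨n, x⟩ := congrArg Sigma.fst h
  obtain ⟨h3, h4⟩ := Sigma.mk.inj_iff.mp hfst
  subst h3
  have hw : w = x := eq_of_heq h4
  subst hw
  exact ⟨inv ι ≫ p, by haveI := hepi; exact epi_comp _ _, h1⟩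

-- ## Topology of the explicit realization

instance toTopObj.compactSpace {n : ℕ} : CompactSpace ((⦋n⦌ : SimplexCategory).toTopObj) :=
  inferInstance

instance (X : SSet) : TopologicalSpace (QR X) := instTopologicalSpaceQuotient

lemma continuous_qm {X : SSet} : Continuous (qm (X := X)) := continuous_quot_mk

noncomputable def cellq {X : SSet} {n : ℕ} (x : X _⦋n⦌) :
    (⦋n⦌ : SimplexCategory).toTopObj → QR X := fun t => qm ⟨⟨n, x⟩, t⟩

lemma continuous_cellq {X : SSet} {n : ℕ} (x : X _⦋n⦌) : Continuous (cellq x) :=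
  continuous_qm.comp (continuous_sigmaMk (ι := Σ n : ℕ, X _⦋n⦌))

lemma isClosed_QR_iff {X : SSet} (C : Set (QR X)) :
    IsClosed C ↔ ∀ (n : ℕ) (x : X _⦋n⦌), IsClosed (cellq x ⁻¹' C) := by
  constructor
  · intro h n x
    exact h.preimage (continuous_cellq x)
  · intro h
    have hq : IsClosed (qm ⁻¹' C) → IsClosed C := fun hh =>
      ⟨(isQuotientMap_quot_mk.isOpen_preimage).mp (by exact hh.isOpen_compl)⟩
    apply hq
    rw [isClosed_sigma_iff]
    rintro ⟨n, x⟩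
    exact h n x

noncomputable def Rel2 {X : SSet} {m n : ℕ} (z : X _⦋m⦌) (x : X _⦋n⦌) :
    Set (((⦋m⦌ : SimplexCategory).toTopObj) × ((⦋n⦌ : SimplexCategory).toTopObj)) :=
  {st | cellq z st.1 = cellq x st.2}

lemma cellq_deg {X : SSet} {m m' : ℕ} (p : (⦋m⦌ : SimplexCategory) ⟶ ⦋m'⦌) (w : X _⦋m'⦌)
    (s : (⦋m⦌ : SimplexCategory).toTopObj) :
    cellq (X.map p.op w) s = cellq w (toTopMap p s) := qm_rel p w s

lemma isClosed_Rel2 {X : SSet} : ∀ (N : ℕ) {m n : ℕ} (z : X _⦋m⦌) (x : X _⦋n⦌),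
    m + n ≤ N → IsClosed (Rel2 z x) := by
  intro N
  induction N using Nat.strong_induction_on with
  | _ N IH =>
  intro m n z x hmn
  by_cases hz : X.IsDegenerate z
  · rcases hez : ez z with ⟨m', p, w⟩
    have hlt : m' < m := by have := ez_lt_of_deg hz; rw [hez] at this; exact this
    have hfac : X.map p.op w = z := by have := ez_fac z; rw [hez] at this; exact this
    have key : Rel2 z x = (fun st : ((⦋m⦌ : SimplexCategory).toTopObj) × ((⦋n⦌ : SimplexCategory).toTopObj)
        => (toTopMap p st.1, st.2)) ⁻¹' Rel2 w x := by
      ext st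
      show cellq z st.1 = cellq x st.2 ↔ cellq w (toTopMap p st.1) = cellq x st.2
      rw [← hfac, cellq_deg]
    rw [key]
    have hcont : Continuous (fun st : ((⦋m⦌ : SimplexCategory).toTopObj) × ((⦋n⦌ : SimplexCategory).toTopObj)
        => (toTopMap p st.1, st.2)) :=
      ((SimplexCategory.continuous_toTopMap p).comp continuous_fst).prodMk continuous_snd
    exact (IH (m' + n) (by omega) w x le_rfl).preimage hcont
  by_cases hx : X.IsDegenerate x
  · rcases hez : ez x with ⟨n', p, w⟩
    have hlt : n' < n := by have := ez_lt_of_deg hx; rw [hez] at this; exact this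
    have hfac : X.map p.op w = x := by have := ez_fac x; rw [hez] at this; exact this
    have key : Rel2 z x = (fun st : ((⦋m⦌ : SimplexCategory).toTopObj) × ((⦋n⦌ : SimplexCategory).toTopObj)
        => (st.1, toTopMap p st.2)) ⁻¹' Rel2 z w := by
      ext st
      show cellq z st.1 = cellq x st.2 ↔ cellq z st.1 = cellq w (toTopMap p st.2)
      rw [← hfac, cellq_deg]
    rw [key]
    have hcont : Continuous (fun st : ((⦋m⦌ : SimplexCategory).toTopObj) × ((⦋n⦌ : SimplexCategory).toTopObj)
        => (st.1, toTopMap p st.2)) :=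
      continuous_fst.prodMk ((SimplexCategory.continuous_toTopMap p).comp continuous_snd)
    exact (IH (m + n') (by omega) z w le_rfl).preimage hcont
  -- both nondegenerate
  · let ι := {JJ : Finset (Fin (m+1)) × Finset (Fin (n+1)) //
      JJ.1.Nonempty ∧ JJ.2.Nonempty ∧ ¬(JJ.1 = Finset.univ ∧ JJ.2 = Finset.univ)}
    let S : ι → Set (((⦋m⦌ : SimplexCategory).toTopObj) × ((⦋n⦌ : SimplexCategory).toTopObj)) :=
      fun i => (fun uv : ((⦋i.1.1.card - 1⦌ : SimplexCategory).toTopObj) ×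
          ((⦋i.1.2.card - 1⦌ : SimplexCategory).toTopObj) =>
          (toTopMap (inclHom i.1.1 i.2.1) uv.1, toTopMap (inclHom i.1.2 i.2.2.1) uv.2)) ''
        Rel2 (X.map (inclHom i.1.1 i.2.1).op z) (X.map (inclHom i.1.2 i.2.2.1).op x)
    have hSclosed : IsClosed (⋃ i, S i) := by
      apply isClosed_iUnion_of_finite
      intro i
      obtain ⟨⟨J, J'⟩, hJ, hJ', hne⟩ := i
      have hc1 : J.card ≤ m + 1 := by
        have := Finset.card_le_card (Finset.subset_univ J)
        simpa using this
      have hc2 : J'.card ≤ n + 1 := by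
        have := Finset.card_le_card (Finset.subset_univ J')
        simpa using this
      have hstrict : J.card < m + 1 ∨ J'.card < n + 1 := by
        by_contra hcon
        push_neg at hcon
        apply hne
        constructor
        · apply Finset.eq_univ_of_card
          simp only [Fintype.card_fin]
          omega
        · apply Finset.eq_univ_of_card
          simp only [Fintype.card_fin]
          omega
      have hdim : (J.card - 1) + (J'.card - 1) < N := by
        have hp1 : 0 < J.card := hJ.card_pos
        have hp2 : 0 < J'.card := hJ'.card_pos
        omega
      have hclosed' : IsClosed (Rel2 (X.map (inclHom J hJ).op z) (X.map (inclHom J' hJ').op x)) :=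
        IH _ hdim _ _ le_rfl
      have hcomp : IsCompact (Rel2 (X.map (inclHom J hJ).op z) (X.map (inclHom J' hJ').op x)) :=
        hclosed'.isCompact
      apply IsCompact.isClosed
      apply hcomp.image
      exact ((SimplexCategory.continuous_toTopMap _).comp continuous_fst).prodMk
        ((SimplexCategory.continuous_toTopMap _).comp continuous_snd)
    have hUsub : (⋃ i, S i) ⊆ Rel2 z x := by
      rintro st hst
      simp only [Set.mem_iUnion] at hst
      obtain ⟨⟨⟨J, J'⟩, hJ, hJ', hne⟩, hmem⟩ := hst
      obtain ⟨⟨u, v⟩, huv, heq⟩ := hmem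
      have h1 : st.1 = toTopMap (inclHom J hJ) u := (congrArg Prod.fst heq).symm
      have h2 : st.2 = toTopMap (inclHom J' hJ') v := (congrArg Prod.snd heq).symm
      show cellq z st.1 = cellq x st.2
      rw [h1, h2, ← cellq_deg, ← cellq_deg]
      exact huv
    have cover : ∀ st, st ∈ Rel2 z x → ¬(Itr st.1 ∧ Itr st.2) → st ∈ ⋃ i, S i := by
      rintro ⟨s, t⟩ hst hni
      have hne : ¬(supp s = Finset.univ ∧ supp t = Finset.univ) := by
        intro ⟨ha, hb⟩
        exact hni ⟨(supp_eq_univ_iff s).mp ha, (supp_eq_univ_iff t).mp hb⟩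
      refine Set.mem_iUnion.mpr ⟨⟨⟨supp s, supp t⟩, supp_nonempty s, supp_nonempty t, hne⟩, ?_⟩
      refine ⟨⟨restr (supp s) (supp_nonempty s) s subset_rfl,
        restr (supp t) (supp_nonempty t) t subset_rfl⟩, ?_, ?_⟩
      · show cellq _ _ = cellq _ _
        rw [cellq_deg, cellq_deg, toTopMap_inclHom_restr, toTopMap_inclHom_restr]
        exact hst
      · show (toTopMap _ _, toTopMap _ _) = (s, t)
        rw [toTopMap_inclHom_restr, toTopMap_inclHom_restr]
    by_cases heq : (⟨m, z⟩ : Σ k : ℕ, X _⦋k⦌) = ⟨n, x⟩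
    · obtain ⟨h1, h2⟩ := Sigma.mk.inj_iff.mp heq
      subst h1
      have hzx : z = x := eq_of_heq h2
      subst hzx
      have hset : Rel2 z z = setOf (fun st : ((⦋m⦌ : SimplexCategory).toTopObj) ×
          ((⦋m⦌ : SimplexCategory).toTopObj) => st.1 = st.2) ∪ ⋃ i, S i := by
        apply Set.Subset.antisymm
        · rintro ⟨s, t⟩ hst
          by_cases hitr : Itr s ∧ Itr t
          · left
            have hcan := (qm_eq_iff_can _ _).mp hst
            rw [can_eq_self hitr.1 hz, can_eq_self hitr.2 hz] at hcan
            obtain ⟨-, hh⟩ := Sigma.mk.inj_iff.mp hcan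
            exact eq_of_heq hh
          · right
            exact cover _ hst hitr
        · rintro st (h | h)
          · show cellq z st.1 = cellq z st.2
            rw [show st.1 = st.2 from h]
          · exact hUsub h
      rw [hset]
      exact IsClosed.union (isClosed_eq continuous_fst continuous_snd) hSclosed
    · have hset : Rel2 z x = ⋃ i, S i := by
        apply Set.Subset.antisymm
        · rintro ⟨s, t⟩ hst
          by_cases hitr : Itr s ∧ Itr t
          · exfalso
            have hcan := (qm_eq_iff_can _ _).mp hst
            rw [can_eq_self hitr.1 hz, can_eq_self hitr.2 hx] at hcan
            exact heq (congrArg Sigma.fst hcan)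
          · exact cover _ hst hitr
        · exact hUsub
      rw [hset]
      exact hSclosed

-- ## The induced map on realizations

def PtMap {Y X : SSet} (f : Y ⟶ X) : PtT Y → PtT X :=
  fun a => ⟨⟨a.1.1, f.app (Opposite.op ⦋a.1.1⦌) a.1.2⟩, a.2⟩

lemma PtMap_rel {Y X : SSet} (f : Y ⟶ X) {a b : PtT Y} (h : PtRel Y a b) :
    PtRel X (PtMap f a) (PtMap f b) := by
  cases h with
  | mk g y t =>
    have hnat : f.app (Opposite.op ⦋_⦌) (Y.map g.op y) = X.map g.op (f.app (Opposite.op ⦋_⦌) y) :=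
      NatTrans.naturality_apply f g.op y
    show PtRel X ⟨⟨_, f.app _ (Y.map g.op y)⟩, t⟩ ⟨⟨_, f.app _ y⟩, toTopMap g t⟩
    rw [hnat]
    exact PtRel.mk g (f.app _ y) t

lemma eqvgen_map {α β : Type*} {r : α → α → Prop} {p : β → β → Prop} (F : α → β)
    (hF : ∀ a b, r a b → p (F a) (F b)) {a b : α} (h : EqvGen r a b) :
    EqvGen p (F a) (F b) := by
  induction h with
  | rel a b h => exact EqvGen.rel _ _ (hF _ _ h)
  | refl => exact EqvGen.refl _
  | symm _ _ _ ih => exact EqvGen.symm _ _ ih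
  | trans _ _ _ _ _ ih1 ih2 => exact EqvGen.trans _ _ _ ih1 ih2

noncomputable def QMap {Y X : SSet} (f : Y ⟶ X) : QR Y → QR X :=
  Quotient.map (PtMap f) (fun _ _ h => eqvgen_map (PtMap f) (fun _ _ hr => PtMap_rel f hr) h)

lemma QMap_qm {Y X : SSet} (f : Y ⟶ X) (a : PtT Y) : QMap f (qm a) = qm (PtMap f a) :=
  Quotient.map_mk _ _ a

lemma QMap_cellq {Y X : SSet} (f : Y ⟶ X) {k : ℕ} (y : Y _⦋k⦌) (s) :
    QMap f (cellq y s) = cellq (f.app (Opposite.op ⦋k⦌) y) s :=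
  QMap_qm f _

lemma continuous_PtMap {Y X : SSet} (f : Y ⟶ X) : Continuous (PtMap f) := by
  apply continuous_sigma
  rintro ⟨n, y⟩
  exact continuous_sigmaMk (σ := fun p : Σ n : ℕ, X _⦋n⦌ => (⦋p.1⦌ : SimplexCategory).toTopObj)
    (i := ⟨n, f.app (Opposite.op ⦋n⦌) y⟩)

lemma continuous_QMap {Y X : SSet} (f : Y ⟶ X) : Continuous (QMap f) := by
  have hcomp : (QMap f) ∘ (Quot.mk (ptSetoid Y).r) = qm ∘ PtMap f :=
    funext (fun a => QMap_qm f a)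
  refine isQuotientMap_quot_mk.continuous_iff.mpr ?_
  exact continuous_qm.comp (continuous_PtMap f)

-- ## Finiteness of carriers

/-- vertex-based finiteness: the nondegenerate simplices of `Y` whose image is a

degeneracy of a member of a finite family are finitely many. -/
lemma finite_carrier {Y X : SSet} (f : Y ⟶ X) (hY : Y.IsLocallyFinite)
    (hf : ∀ (n : ℕ) (x : X _⦋n⦌), (f.app (Opposite.op ⦋n⦌) ⁻¹' {x}).Finite)
    (W : Set (Σ d : ℕ, X _⦋d⦌)) (hW : W.Finite) :
    {q : Σ k : ℕ, Y _⦋k⦌ | ¬ Y.IsDegenerate q.2 ∧ ∃ w ∈ W,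
      ∃ (τ : (⦋q.1⦌ : SimplexCategory) ⟶ ⦋w.1⦌), Epi τ ∧
        f.app (Opposite.op ⦋q.1⦌) q.2 = X.map τ.op w.2}.Finite := by
  classical
  set Vset : Set (X _⦋0⦌) := ⋃ w ∈ W, Set.range (fun j : Fin (w.1+1) =>
    X.map (SimplexCategory.const ⦋0⦌ ⦋w.1⦌ j).op w.2) with hVset
  have hVfin : Vset.Finite := hW.biUnion (fun w _ => Set.finite_range _)
  set VY : Set (Y _⦋0⦌) := ⋃ u ∈ Vset, (f.app (Opposite.op ⦋0⦌) ⁻¹' {u}) with hVY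
  have hVYfin : VY.Finite := hVfin.biUnion (fun u _ => hf 0 u)
  apply Set.Finite.subset (hVYfin.biUnion (fun v _ => hY 0 v))
  rintro ⟨k, y⟩ ⟨hnd, w, hw, τ, hτ, hfy⟩
  have hv : Y.map (SimplexCategory.const ⦋0⦌ ⦋k⦌ 0).op y ∈ VY := by
    refine Set.mem_biUnion ?_ rfl
    refine Set.mem_biUnion hw ⟨τ.toOrderHom 0, ?_⟩
    have h1 : f.app (Opposite.op ⦋0⦌) (Y.map (SimplexCategory.const ⦋0⦌ ⦋k⦌ 0).op y)
        = X.map (SimplexCategory.const ⦋0⦌ ⦋k⦌ 0).op (f.app (Opposite.op ⦋k⦌) y) :=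
      NatTrans.naturality_apply f (SimplexCategory.const ⦋0⦌ ⦋k⦌ 0).op y
    show X.map (SimplexCategory.const ⦋0⦌ ⦋w.1⦌ (τ.toOrderHom 0)).op w.2
        = f.app (Opposite.op ⦋0⦌) (Y.map (SimplexCategory.const ⦋0⦌ ⦋k⦌ 0).op y)
    rw [h1, hfy, ← FunctorToTypes.map_comp_apply, ← op_comp, SimplexCategory.const_comp]
  refine Set.mem_biUnion hv ⟨hnd, ?_⟩
  exact ⟨0, 𝟙 _, SimplexCategory.const ⦋0⦌ ⦋k⦌ 0, by simp⟩

-- ## Compact fibers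

lemma isClosed_singleton_QR {X : SSet} (c : QR X) : IsClosed ({c} : Set (QR X)) := by
  obtain ⟨a, rfl⟩ := Quotient.exists_rep c
  rw [isClosed_QR_iff]
  intro k z
  have hkey : cellq z ⁻¹' {Quotient.mk (ptSetoid X) a}
      = (fun s => (s, a.2)) ⁻¹' Rel2 z a.1.2 := by
    ext s
    simp only [Set.mem_preimage, Set.mem_singleton_iff]
    exact Iff.rfl
  rw [hkey]
  exact (isClosed_Rel2 (k + a.1.1) z a.1.2 le_rfl).preimage
    (continuous_id.prodMk continuous_const)

lemma can_can {X : SSet} (a : PtT X) : can (can a) = can a := by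
  have h1 : ¬ X.IsDegenerate (can a).1.2 := can_nondeg a
  have h2 : Itr (can a).2 := can_itr a
  exact can_eq_self h2 h1

lemma isCompact_fiber {Y X : SSet} (f : Y ⟶ X) (hY : Y.IsLocallyFinite)
    (hf : ∀ (n : ℕ) (x : X _⦋n⦌), (f.app (Opposite.op ⦋n⦌) ⁻¹' {x}).Finite)
    (c : QR X) : IsCompact (QMap f ⁻¹' {c}) := by
  obtain ⟨a, rfl⟩ := Quotient.exists_rep c
  have hq : Quotient.mk (ptSetoid X) a = qm (can a) := qm_can a
  rw [hq]
  set b := can a with hb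
  have hbnd : ¬ X.IsDegenerate b.1.2 := can_nondeg a
  have hbitr : Itr b.2 := can_itr a
  have hbcan : can b = b := can_can a
  set S := {q : Σ k : ℕ, Y _⦋k⦌ | ¬ Y.IsDegenerate q.2 ∧
    ∃ w ∈ ({b.1} : Set (Σ d : ℕ, X _⦋d⦌)),
      ∃ (τ : (⦋q.1⦌ : SimplexCategory) ⟶ ⦋w.1⦌), Epi τ ∧
        f.app (Opposite.op ⦋q.1⦌) q.2 = X.map τ.op w.2} with hS
  have hSfin : S.Finite := finite_carrier f hY hf {b.1} (Set.finite_singleton _)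
  have hclosed : IsClosed (QMap f ⁻¹' {qm b}) :=
    (isClosed_singleton_QR _).preimage (continuous_QMap f)
  have hcover : QMap f ⁻¹' {qm b} ⊆ ⋃ q ∈ S, Set.range (cellq q.2) := by
    intro c' hc'
    obtain ⟨a', rfl⟩ := Quotient.exists_rep c'
    simp only [Set.mem_preimage, Set.mem_singleton_iff] at hc'
    have h1 : Quotient.mk (ptSetoid Y) a' = qm (can a') := qm_can a'
    rcases hbe : can a' with ⟨⟨k, y⟩, s⟩
    have hnd' : ¬ Y.IsDegenerate y := by have := can_nondeg a'; rw [hbe] at this; exact this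
    have hitr : Itr s := by have := can_itr a'; rw [hbe] at this; exact this
    have h2 : QMap f (qm ⟨⟨k, y⟩, s⟩) = qm b := by
      rw [← hbe, ← h1]; exact hc'
    rw [QMap_qm] at h2
    have hcan : can (⟨⟨k, f.app (Opposite.op ⦋k⦌) y⟩, s⟩ : PtT X) = b := by
      have := (qm_eq_iff_can _ _).mp h2
      rw [hbcan] at this
      exact this
    obtain ⟨τ, hτ, hτ2⟩ := exists_epi_of_can_eq hitr hcan
    have hqS : (⟨k, y⟩ : Σ k : ℕ, Y _⦋k⦌) ∈ S :=
      ⟨hnd', b.1, rfl, τ, hτ, hτ2.symm⟩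
    refine Set.mem_biUnion hqS ⟨s, ?_⟩
    rw [h1, hbe]
    rfl
  exact IsCompact.of_isClosed_subset
    (hSfin.isCompact_biUnion (fun q _ => isCompact_range (continuous_cellq q.2)))
    hclosed hcover

lemma isClosedMap_QMap {Y X : SSet} (f : Y ⟶ X) (hY : Y.IsLocallyFinite)
    (hX : X.IsLocallyFinite)
    (hf : ∀ (n : ℕ) (x : X _⦋n⦌), (f.app (Opposite.op ⦋n⦌) ⁻¹' {x}).Finite) :
    IsClosedMap (QMap f) := by
  intro C hC
  rw [isClosed_QR_iff]
  suffices hnd : ∀ (n : ℕ) (x : X _⦋n⦌), ¬ X.IsDegenerate x →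
      IsClosed (cellq x ⁻¹' (QMap f '' C)) by
    intro n x
    rcases hez : ez x with ⟨n', p, w⟩
    have hfac : X.map p.op w = x := by have := ez_fac x; rw [hez] at this; exact this
    have hw : ¬ X.IsDegenerate w := by have := ez_nondeg x; rw [hez] at this; exact this
    have hkey : cellq x ⁻¹' (QMap f '' C) = toTopMap p ⁻¹' (cellq w ⁻¹' (QMap f '' C)) := by
      ext s
      simp only [Set.mem_preimage]
      rw [← hfac, cellq_deg]
    rw [hkey]
    exact (hnd _ w hw).preimage (SimplexCategory.continuous_toTopMap p)
  intro n x hx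
  set W := {p : Σ d : ℕ, X _⦋d⦌ | ¬ X.IsDegenerate p.2 ∧ X.Adjacent x p.2} with hWdef
  have hWfin : W.Finite := hX n x
  set S := {q : Σ k : ℕ, Y _⦋k⦌ | ¬ Y.IsDegenerate q.2 ∧ ∃ w ∈ W,
    ∃ (τ : (⦋q.1⦌ : SimplexCategory) ⟶ ⦋w.1⦌), Epi τ ∧
      f.app (Opposite.op ⦋q.1⦌) q.2 = X.map τ.op w.2} with hS
  have hSfin : S.Finite := finite_carrier f hY hf W hWfin
  have hset : cellq x ⁻¹' (QMap f '' C) = ⋃ q ∈ S,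
      Prod.snd '' (Rel2 (f.app (Opposite.op ⦋q.1⦌) q.2) x ∩
        ((cellq q.2 ⁻¹' C) ×ˢ (Set.univ : Set ((⦋n⦌ : SimplexCategory).toTopObj)))) := by
    apply Set.Subset.antisymm
    · intro t ht
      obtain ⟨c, hcC, hcq⟩ := ht
      obtain ⟨a', rfl⟩ := Quotient.exists_rep c
      have h1 : Quotient.mk (ptSetoid Y) a' = qm (can a') := qm_can a'
      rcases hbe : can a' with ⟨⟨k, y⟩, s⟩
      have hnd' : ¬ Y.IsDegenerate y := by have := can_nondeg a'; rw [hbe] at this; exact this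
      have hitr : Itr s := by have := can_itr a'; rw [hbe] at this; exact this
      have h2 : QMap f (qm ⟨⟨k, y⟩, s⟩) = cellq x t := by
        rw [← hbe, ← h1]; exact hcq
      rw [QMap_qm] at h2
      have hcan : can (⟨⟨k, f.app (Opposite.op ⦋k⦌) y⟩, s⟩ : PtT X)
          = can (⟨⟨n, x⟩, t⟩ : PtT X) := (qm_eq_iff_can _ _).mp h2
      have hwW : (can (⟨⟨n, x⟩, t⟩ : PtT X)).1 ∈ W :=
        ⟨can_nondeg _, can_adjacent (⟨⟨n, x⟩, t⟩ : PtT X)⟩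
      obtain ⟨τ, hτ, hτ2⟩ := exists_epi_of_can_eq hitr hcan
      have hqS : (⟨k, y⟩ : Σ k : ℕ, Y _⦋k⦌) ∈ S :=
        ⟨hnd', (can (⟨⟨n, x⟩, t⟩ : PtT X)).1, hwW, τ, hτ, hτ2.symm⟩
      refine Set.mem_biUnion hqS ⟨(s, t), ⟨?_, ?_, Set.mem_univ _⟩, rfl⟩
      · show cellq (f.app (Opposite.op ⦋k⦌) y) s = cellq x t
        exact h2
      · show cellq y s ∈ C
        rw [show cellq y s = Quotient.mk (ptSetoid Y) a' from by rw [h1, hbe]; rfl]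
        exact hcC
    · intro t ht
      simp only [Set.mem_iUnion] at ht
      obtain ⟨q, hq, ⟨⟨s, t'⟩, ⟨hrel, hsC, -⟩, hsnd⟩⟩ := ht
      have ht' : t' = t := hsnd
      subst ht'
      refine ⟨cellq q.2 s, hsC, ?_⟩
      rw [QMap_cellq]
      exact hrel
  rw [hset]
  apply hSfin.isClosed_biUnion
  intro q _
  apply IsCompact.isClosed
  apply IsCompact.image _ continuous_snd
  apply IsClosed.isCompact
  exact (isClosed_Rel2 (q.1 + n) _ _ le_rfl).inter
    ((hC.preimage (continuous_cellq q.2)).prod isClosed_univ)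

theorem isProperMap_QMap {Y X : SSet} (f : Y ⟶ X) (hY : Y.IsLocallyFinite)
    (hX : X.IsLocallyFinite)
    (hf : ∀ (n : ℕ) (x : X _⦋n⦌), (f.app (Opposite.op ⦋n⦌) ⁻¹' {x}).Finite) :
    IsProperMap (QMap f) :=
  isProperMap_iff_isClosedMap_and_compact_fibers.mpr
    ⟨continuous_QMap f, isClosedMap_QMap f hY hX hf, fun c => isCompact_fiber f hY hf c⟩

-- ## Identification with the geometric realization via the adjunction

noncomputable def QFun : SSet ⥤ TopCat where
  obj X := TopCat.of (QR X)
  map {Y X} f := TopCat.ofHom ⟨QMap f, continuous_QMap f⟩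
  map_id X := by
    apply TopCat.ext
    intro a
    obtain ⟨p, rfl⟩ := Quotient.exists_rep a
    rfl
  map_comp f g := by
    apply TopCat.ext
    intro a
    obtain ⟨p, rfl⟩ := Quotient.exists_rep a
    rfl

noncomputable def evalN {X : SSet} {Z : TopCat} (η : X ⟶ TopCat.toSSet.obj Z) {n : ℕ}
    (x : X _⦋n⦌) : C(((⦋n⦌ : SimplexCategory).toTopObj), Z) :=
  Z.toSSetObjEquiv _ (η.app (Opposite.op ⦋n⦌) x)

lemma lift_wd {X : SSet} {Z : TopCat} (η : X ⟶ TopCat.toSSet.obj Z) :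
    ∀ a b : PtT X, EqvGen (PtRel X) a b →
      (evalN η a.1.2) a.2 = (evalN η b.1.2) b.2 := by
  intro a b h
  induction h with
  | rel a b h =>
    cases h with
    | @mk k n g x t =>
      have hnat : evalN η (X.map g.op x)
          = ContinuousMap.comp (evalN η x) ⟨toTopMap g, SimplexCategory.continuous_toTopMap g⟩ :=
        (congrArg (Z.toSSetObjEquiv _) (NatTrans.naturality_apply η g.op x) :)
      exact ContinuousMap.congr_fun hnat t
  | refl => rfl
  | symm _ _ _ ih => exact ih.symm
  | trans _ _ _ _ _ ih1 ih2 => exact ih1.trans ih2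

noncomputable def QHomEquiv (X : SSet) (Z : TopCat) :
    (TopCat.of (QR X) ⟶ Z) ≃ (X ⟶ TopCat.toSSet.obj Z) where
  toFun h :=
    { app := fun c => TypeCat.ofHom fun x => (Z.toSSetObjEquiv c).symm ⟨fun t => h (qm ⟨⟨c.unop.len, x⟩, t⟩),
        h.hom.continuous.comp (continuous_cellq (X := X) (n := c.unop.len) x)⟩
      naturality := fun c c' g => by
        apply ConcreteCategory.ext_apply
        intro x
        apply (Z.toSSetObjEquiv c').injective
        apply ContinuousMap.ext
        intro t
        show h (qm ⟨⟨c'.unop.len, X.map g x⟩, t⟩) = h (qm ⟨⟨c.unop.len, x⟩, toTopMap g.unop t⟩)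
        exact congrArg h (qm_rel (k := c'.unop.len) (n := c.unop.len) g.unop x t) }
  invFun η := TopCat.ofHom ⟨Quotient.lift (fun a : PtT X => (evalN η a.1.2) a.2)
      (fun a b h => lift_wd η a b h), by
    apply Continuous.quotient_lift
    apply continuous_sigma
    rintro ⟨n, x⟩
    exact (evalN η x).continuous⟩
  left_inv h := by
    apply TopCat.ext
    intro a
    obtain ⟨p, rfl⟩ := Quotient.exists_rep a
    rfl
  right_inv η := by
    apply NatTrans.ext
    funext c
    apply ConcreteCategory.ext_apply
    intro x
    apply (Z.toSSetObjEquiv c).injective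
    apply ContinuousMap.ext
    intro t
    rfl

noncomputable def QAdj : QFun ⊣ TopCat.toSSet :=
  Adjunction.mkOfHomEquiv
    { homEquiv := QHomEquiv
      homEquiv_naturality_left_symm := by
        intro X' X Z f g
        apply TopCat.ext
        intro a
        obtain ⟨p, rfl⟩ := Quotient.exists_rep a
        rfl
      homEquiv_naturality_right := by
        intro X Z Z' f g
        apply NatTrans.ext
        funext c
        apply ConcreteCategory.ext_apply
        intro x
        apply (Z'.toSSetObjEquiv c).injective
        apply ContinuousMap.ext
        intro t
        rfl }

noncomputable def QIso : SSet.toTop ≅ QFun := sSetTopAdj.leftAdjointUniq QAdj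

theorem main_result {Y X : SSet} (f : Y ⟶ X)
    (hY : Y.IsLocallyFinite) (hX : X.IsLocallyFinite)
    (hf : ∀ (n : ℕ) (x : X _⦋n⦌), (f.app (Opposite.op ⦋n⦌) ⁻¹' {x}).Finite) :
    IsProperMap (SSet.toTop.map f) := by
  have hnat : SSet.toTop.map f = QIso.hom.app Y ≫ QFun.map f ≫ QIso.inv.app X := by
    rw [← Category.assoc, ← QIso.hom.naturality f, Category.assoc, Iso.hom_inv_id_app,
      Category.comp_id]
  rw [hnat]
  have hfun : ⇑(QIso.hom.app Y ≫ QFun.map f ≫ QIso.inv.app X)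
      = (⇑(QIso.inv.app X)) ∘ (QMap f) ∘ (⇑(QIso.hom.app Y)) := rfl
  rw [hfun]
  have h1 : IsProperMap (⇑(QIso.hom.app Y)) := (TopCat.homeoOfIso (QIso.app Y)).isProperMap
  have h2 : IsProperMap (⇑(QIso.inv.app X)) := (TopCat.homeoOfIso (QIso.app X).symm).isProperMap
  exact h2.comp ((isProperMap_QMap f hY hX hf).comp h1)

end SSetProper


/-- A proper morphism between locally finite simplicial sets realizes to a
proper map of topological spaces. -/
theorem proper_morphism_realization_isProperMap {Y X : SSet} (f : Y ⟶ X)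
    (hY : Y.IsLocallyFinite) (hX : X.IsLocallyFinite)
    (hf : ∀ (n : ℕ) (x : X _⦋n⦌), (f.app (Opposite.op ⦋n⦌) ⁻¹' {x}).Finite) :
    IsProperMap (SSet.toTop.map f) :=
  SSetProper.main_result f hY hX hf
end

section
/- A simplicial set X is locally finite if and only if each 0-simplex of X is adjacent to only finitely many nondegenerate simplices of X. -/
open CategoryTheory Simplicial

instance (n : ℕ) : Finite ((⦋0⦌ : SimplexCategory) ⟶ ⦋n⦌) := by
  have : Function.Injective (fun f : (⦋0⦌ : SimplexCategory) ⟶ ⦋n⦌ => f.toOrderHom.toFun) := by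
    intro a b h; ext x : 3; exact congrFun h x
  exact Finite.of_injective _ this

/-- A simplicial set is locally finite iff each `0`-simplex is adjacent to only
finitely many nondegenerate simplices. -/
theorem isLocallyFinite_iff_vertices (X : SSet) :
    X.IsLocallyFinite ↔ ∀ v : X _⦋0⦌,
      {p : (m : ℕ) × X _⦋m⦌ | ¬ X.IsDegenerate p.2 ∧ X.Adjacent v p.2}.Finite := by
  constructor
  · intro h v
    exact h 0 v
  · intro h n x
    apply Set.Finite.subset
      (Set.finite_iUnion (fun g : (⦋0⦌ : SimplexCategory) ⟶ ⦋n⦌ =>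
        h (X.map g.op x)))
    rintro p ⟨hp, k, f, f', hf⟩
    refine Set.mem_iUnion.2 ⟨SimplexCategory.const _ _ 0 ≫ f, hp,
      0, 𝟙 _, SimplexCategory.const _ _ 0 ≫ f', ?_⟩
    simp only [op_comp, FunctorToTypes.map_comp_apply, op_id, FunctorToTypes.map_id_apply, hf]
end

section
/- Let 𝔛 be a locally compact Hausdorff topological space, let θ : [m] → [n] be a morphism in the simplex category, and let S be a locally finite family of singular n-simplices of 𝔛 (i.e., a subset of Sing(𝔛)_n such that every point of 𝔛 has a neighbourhood meeting the images of only finitely many members of S). Then: (i) the family {σ ∘ |θ| : σ ∈ S} of singular m-simplices is locally finite in 𝔛, and (ii) the map σ ↦ σ ∘ |θ| restricted to S has finite fibers. (Hence the structure maps of the singular simplicial set of 𝔛 are controlled for the locally-finite control structure.) -/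
open CategoryTheory Simplicial

/-- A set `S` of singular `n`-simplices of a topological space `𝔛` (continuous
maps from the topological `n`-simplex to `𝔛`) is a *locally finite family* if
every point of `𝔛` has a neighbourhood meeting the images of only finitely
many members of `S`. -/
def IsLocallyFiniteFamily {𝔛 : TopCat} {n : ℕ}
    (S : Set (SimplexCategory.toTop.obj ⦋n⦌ ⟶ 𝔛)) : Prop :=
  ∀ x : 𝔛, ∃ U ∈ nhds x, {σ | σ ∈ S ∧ (U ∩ Set.range ⇑σ).Nonempty}.Finite

/-- The topological simplex is nonempty. -/
lemma toTopObj_nonempty (m : ℕ) : Nonempty (SimplexCategory.toTop.obj ⦋m⦌) := by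
  infer_instance

/-- Precomposition with `|θ|` sends locally finite families of singular
simplices to locally finite families, and has finite fibers on them; hence the
structure maps of the singular simplicial set are controlled for the
locally-finite control structure. -/
theorem singular_structure_map_controlled {𝔛 : TopCat}
    [LocallyCompactSpace 𝔛] [T2Space 𝔛] {m n : ℕ}
    (θ : (⦋m⦌ : SimplexCategory) ⟶ ⦋n⦌)
    (S : Set (SimplexCategory.toTop.obj ⦋n⦌ ⟶ 𝔛))
    (hS : IsLocallyFiniteFamily S) :
    IsLocallyFiniteFamily ((fun σ => SimplexCategory.toTop.map θ ≫ σ) '' S) ∧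
    ∀ τ : SimplexCategory.toTop.obj ⦋m⦌ ⟶ 𝔛,
      {σ | σ ∈ S ∧ SimplexCategory.toTop.map θ ≫ σ = τ}.Finite := by
  constructor
  · intro x
    obtain ⟨U, hU, hfin⟩ := hS x
    refine ⟨U, hU, ?_⟩
    have : {τ | τ ∈ (fun σ => SimplexCategory.toTop.map θ ≫ σ) '' S ∧
        (U ∩ Set.range ⇑τ).Nonempty} ⊆
        (fun σ => SimplexCategory.toTop.map θ ≫ σ) ''
          {σ | σ ∈ S ∧ (U ∩ Set.range ⇑σ).Nonempty} := by
      rintro τ ⟨⟨σ, hσS, rfl⟩, y, hyU, p, hp⟩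
      exact ⟨σ, ⟨hσS, y, hyU, SimplexCategory.toTop.map θ p, hp⟩, rfl⟩
    exact (hfin.image _).subset this
  · intro τ
    obtain ⟨p⟩ := toTopObj_nonempty m
    obtain ⟨U, hU, hfin⟩ := hS (τ p)
    refine hfin.subset ?_
    rintro σ ⟨hσS, rfl⟩
    exact ⟨hσS, _, mem_of_mem_nhds hU, SimplexCategory.toTop.map θ p, rfl⟩
end

section
/- Let g : 𝔛 → 𝔛' be a proper continuous map between locally compact Hausdorff spaces, and let S be a locally finite family of singular n-simplices of 𝔛. Then: (i) the family {g ∘ σ : σ ∈ S} of singular n-simplices of 𝔛' is locally finite in 𝔛', and (ii) the map σ ↦ g ∘ σ restricted to S has finite fibers. (Hence postcomposition with g is a controlled map of singular controlled sets.) -/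
open CategoryTheory Simplicial

lemma aux_compact {𝔛 : TopCat} {n : ℕ}
    {S : Set (SimplexCategory.toTop.obj ⦋n⦌ ⟶ 𝔛)}
    (hS : IsLocallyFiniteFamily S) {K : Set 𝔛} (hK : IsCompact K) :
    {σ | σ ∈ S ∧ (K ∩ Set.range ⇑σ).Nonempty}.Finite := by
  choose U hU hfin using hS
  obtain ⟨t, -, ht⟩ := hK.elim_nhds_subcover U (fun x _ => hU x)
  apply Set.Finite.subset (t.finite_toSet.biUnion fun x _ => hfin x)
  rintro σ ⟨hσS, y, hyK, hyr⟩
  obtain ⟨x, hx, hyU⟩ := Set.mem_iUnion₂.mp (ht hyK)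
  exact Set.mem_biUnion hx ⟨hσS, y, hyU, hyr⟩

/-- Postcomposition with a proper map `g : 𝔛 → 𝔛'` sends locally finite
families of singular `n`-simplices of `𝔛` to locally finite families of
singular `n`-simplices of `𝔛'`, with finite fibers; hence postcomposition with
`g` is a controlled map of singular controlled sets. -/
theorem singular_postcomposition_controlled {𝔛 𝔛' : TopCat}
    [LocallyCompactSpace 𝔛] [T2Space 𝔛] [LocallyCompactSpace 𝔛'] [T2Space 𝔛']
    (g : 𝔛 ⟶ 𝔛') (hg : IsProperMap ⇑g) {n : ℕ}
    (S : Set (SimplexCategory.toTop.obj ⦋n⦌ ⟶ 𝔛))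
    (hS : IsLocallyFiniteFamily S) :
    IsLocallyFiniteFamily ((fun σ => σ ≫ g) '' S) ∧
    ∀ τ : SimplexCategory.toTop.obj ⦋n⦌ ⟶ 𝔛',
      {σ | σ ∈ S ∧ σ ≫ g = τ}.Finite := by
  constructor
  · intro x'
    obtain ⟨K, hK, hKnhds⟩ := exists_compact_mem_nhds x'
    refine ⟨K, hKnhds, ?_⟩
    have hfin := (aux_compact hS (hg.isCompact_preimage hK)).image (fun σ => σ ≫ g)
    apply hfin.subset
    rintro τ ⟨⟨σ, hσS, rfl⟩, y, hyK, z, hz⟩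
    have hz' : g (σ z) = y := hz
    exact ⟨σ, ⟨hσS, σ z, ⟨by rw [Set.mem_preimage, hz']; exact hyK, z, rfl⟩⟩, rfl⟩
  · intro τ
    have p : SimplexCategory.toTop.obj ⦋n⦌ := Classical.arbitrary _
    apply (aux_compact hS (hg.isCompact_preimage isCompact_singleton (K := {τ p}))).subset
    rintro σ ⟨hσS, rfl⟩
    exact ⟨hσS, σ p, rfl, p, rfl⟩
end
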